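/- For all integers n ≥ 1, ∑_{k=1}^n (4^k / C(2k,k))·H_k² = 44/27 + (2^{2n+1}/(3·C(2n,n)))·((n+1)·H_n² - (2(2n-1)/3)·H_n + (8n-22)/9) + (1/3)·∑_{k=1}^n 4^k/(k²·C(2k,k)). -/

import Mathlib

open Finset BigOperators

def H (n : ℕ) : ℚ := ∑ j ∈ Finset.range n, 1/(j+1)

lemma H_succ (n : ℕ) : H (n+1) = H n + 1/((n:ℚ)+1) := by
  simp [H, Finset.sum_range_succ]

lemma choose_rec (n : ℕ) :
    ((n:ℚ)+1) * (Nat.choose (2*(n+1)) (n+1)) = 2*(2*(n:ℚ)+1) * (Nat.choose (2*n) n) := by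
  have := Nat.succ_mul_centralBinom_succ n
  have h2 : ((n+1) * Nat.centralBinom (n+1) : ℚ) = (2 * (2*n+1) * Nat.centralBinom n : ℕ) := by
    exact_mod_cast congrArg (Nat.cast : ℕ → ℚ) this
  simpa [Nat.centralBinom] using h2

lemma choose_pos' (n : ℕ) : (0:ℚ) < (Nat.choose (2*n) n) := by
  exact_mod_cast Nat.choose_pos (by omega)

theorem stmt19 (n : ℕ) (hn : 1 ≤ n) :
    ∑ k ∈ Finset.Icc 1 n, (4:ℚ)^k / (Nat.choose (2*k) k) * (H k)^2 =
      44/27 + (2^(2*n+1) / (3 * (Nat.choose (2*n) n))) *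
          (((n:ℚ)+1) * (H n)^2 - (2*(2*(n:ℚ)-1)/3) * H n + (8*(n:ℚ)-22)/9)
        + (1/3) * ∑ k ∈ Finset.Icc 1 n, (4:ℚ)^k / ((k:ℚ)^2 * (Nat.choose (2*k) k)) := by
  induction n, hn using Nat.le_induction with
  | base => norm_num [H, Finset.sum_range_succ]
  | succ n hn ih =>
    rw [Finset.sum_Icc_succ_top (by omega), Finset.sum_Icc_succ_top (by omega), ih]
    have hc := choose_pos' n
    have hc' := choose_pos' (n+1)
    have hrec := choose_rec n
    have hH := H_succ n
    have hn1 : ((n:ℚ)+1) ≠ 0 := by positivity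
    set c : ℚ := (Nat.choose (2*n) n : ℚ)
    set c' : ℚ := (Nat.choose (2*(n+1)) (n+1) : ℚ)
    have hpow : (2:ℚ)^(2*(n+1)+1) = 4 * 2^(2*n+1) := by rw [show 2*(n+1)+1 = (2*n+1)+2 by ring, pow_add]; ring
    have hpow4 : (4:ℚ)^(n+1) = 4 * 4^n := by ring
    have h4 : (4:ℚ)^n * 2 = 2^(2*n+1) := by
      rw [pow_succ]; rw [show (4:ℚ) = 2^2 by norm_num, ← pow_mul]
    push_cast [hH, hpow]
    have hc'eq : c' = 2*(2*(n:ℚ)+1) * c / ((n:ℚ)+1) := by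
      field_simp at hrec ⊢; linarith [hrec]
    rw [hc'eq]
    have h21 : (2*(2*(n:ℚ)+1)) ≠ 0 := by positivity
    field_simp
    rw [← h4]
    ring
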